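/- Let d ≥ 1, let ρ be a Hermitian positive semidefinite d×d complex matrix with Tr ρ = 1, and let x₁,…,x_n (n ≥ 1) be d×d complex matrices. Then the Poisson moment formula satisfies the growth bound | Σ_σ ∏_{A∈σ} Tr(ρ · ∏_{j∈A} x_j) | ≤ B_n · ∏_{i=1}^n |||x_i|||, where σ runs over all set partitions of {1,…,n}, for each block A the product ∏_{j∈A} x_j is taken in increasing order of the indices, B_n is the Bell number (the total number of set partitions of an n-element set), and |||x||| := max{ ‖x‖, Tr(ρ x*x)^{1/2}, Tr(ρ xx*)^{1/2} } with ‖x‖ the ℓ² → ℓ² operator norm of the matrix x and x* its conjugate transpose. (This is the moment growth estimate used in the noncommutative Hamburger moment theorem argument; the key ingredient is the Cauchy–Schwarz estimate |Tr(ρ x y₁⋯y_r z)| ≤ Tr(ρ xx*)^{1/2} · ∏_i ‖y_i‖ · Tr(ρ z*z)^{1/2}.) -/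

import Mathlib

open scoped BigOperators ComplexOrder Matrix

namespace Stmt19
noncomputable section

/-- A set partition of `Fin n`: a finset of pairwise disjoint nonempty blocks whose union is
everything. -/
def IsSetPartition {n : ℕ} (σ : Finset (Finset (Fin n))) : Prop :=
  ∅ ∉ σ ∧ (∀ A ∈ σ, ∀ B ∈ σ, A ≠ B → Disjoint A B) ∧ σ.sup id = Finset.univ

instance {n : ℕ} (σ : Finset (Finset (Fin n))) : Decidable (IsSetPartition σ) :=
  inferInstanceAs (Decidable (∅ ∉ σ ∧ (∀ A ∈ σ, ∀ B ∈ σ, A ≠ B → Disjoint A B) ∧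
    σ.sup id = Finset.univ))

/-- Ordered product of the matrices `x j`, `j ∈ A`, in increasing order of the index `j`;
the empty product is the identity. -/
def orderedProd {n d : ℕ} (x : Fin n → Matrix (Fin d) (Fin d) ℂ) (A : Finset (Fin n)) :
    Matrix (Fin d) (Fin d) ℂ :=
  ((A.sort (· ≤ ·)).map x).prod

/-- The `ℓ² → ℓ²` operator norm of a `d × d` complex matrix. -/
def opNorm {d : ℕ} (x : Matrix (Fin d) (Fin d) ℂ) : ℝ :=
  ‖Matrix.toEuclideanCLM (𝕜 := ℂ) (n := Fin d) x‖

/-- The seminorm `|||x||| = max{‖x‖, Tr(ρ x*x)^{1/2}, Tr(ρ xx*)^{1/2}}` associated to the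
state `ω(x) = Tr(ρ x)`. -/
def tripleNorm {d : ℕ} (ρ x : Matrix (Fin d) (Fin d) ℂ) : ℝ :=
  max (opNorm x) (max (Real.sqrt ((ρ * xᴴ * x).trace.re)) (Real.sqrt ((ρ * x * xᴴ).trace.re)))

/-! The trace against a density matrix is bounded by the operator norm alone: writing
`ρ = ∑ᵢ vᵢ vᵢ*`, one has `Tr(ρ y) = ∑ᵢ ⟪vᵢ, y vᵢ⟫` and `∑ᵢ ‖vᵢ‖² = Tr ρ = 1`. Since the operator
norm is submultiplicative and `‖x‖ ≤ |||x|||`, each block `A` of a partition contributes at most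
`∏_{j∈A} |||x_j|||`, so every partition contributes at most `∏ᵢ |||x_i|||`. -/

open Matrix

theorem Finset.prod_map_sort {α M : Type*} [CommMonoid M] [LinearOrder α] (A : Finset α)
    (f : α → M) : ((A.sort (· ≤ ·)).map f).prod = ∏ j ∈ A, f j := by
  rw [Finset.prod_eq_multiset_prod, ← Finset.sort_eq A (· ≤ ·), Multiset.map_coe,
    Multiset.prod_coe]

lemma IsSetPartition.nonempty_of_mem {n : ℕ} {σ : Finset (Finset (Fin n))}
    (hσ : IsSetPartition σ) {A : Finset (Fin n)} (hA : A ∈ σ) : A.Nonempty :=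
  Finset.nonempty_iff_ne_empty.mpr fun h => hσ.1 (h ▸ hA)

lemma IsSetPartition.prod_eq {n : ℕ} {M : Type*} [CommMonoid M] {σ : Finset (Finset (Fin n))}
    (hσ : IsSetPartition σ) (f : Fin n → M) : ∏ i, f i = ∏ A ∈ σ, ∏ j ∈ A, f j := by
  rw [← hσ.2.2, Finset.sup_eq_biUnion]
  exact Finset.prod_biUnion fun A hA B hB hAB => hσ.2.1 A hA B hB hAB

lemma opNorm_nonneg {d : ℕ} (x : Matrix (Fin d) (Fin d) ℂ) : 0 ≤ opNorm x :=
  norm_nonneg _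

lemma opNorm_le_tripleNorm {d : ℕ} (ρ x : Matrix (Fin d) (Fin d) ℂ) :
    opNorm x ≤ tripleNorm ρ x :=
  le_max_left _ _

lemma opNorm_orderedProd_le {n d : ℕ} (x : Fin n → Matrix (Fin d) (Fin d) ℂ)
    {A : Finset (Fin n)} (hA : A.Nonempty) :
    opNorm (orderedProd x A) ≤ ∏ j ∈ A, opNorm (x j) := by
  open scoped Matrix.Norms.L2Operator in
  calc opNorm (orderedProd x A) = ‖((A.sort (· ≤ ·)).map x).prod‖ :=
        l2_opNorm_toEuclideanCLM _
    _ ≤ (((A.sort (· ≤ ·)).map x).map norm).prod :=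
        List.norm_prod_le' (by simpa [← List.length_pos_iff] using hA.card_pos)
    _ = ∏ j ∈ A, opNorm (x j) := by rw [List.map_map, Finset.prod_map_sort]; rfl

lemma norm_star_dotProduct_mulVec_le {d : ℕ} (v : Fin d → ℂ) (y : Matrix (Fin d) (Fin d) ℂ) :
    ‖star v ⬝ᵥ (y *ᵥ v)‖ ≤ (star v ⬝ᵥ v).re * opNorm y := by
  set u : EuclideanSpace ℂ (Fin d) := WithLp.toLp 2 v
  have h_inner : star v ⬝ᵥ (y *ᵥ v) = inner ℂ u (toEuclideanCLM (𝕜 := ℂ) y u) := by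
    rw [EuclideanSpace.inner_eq_star_dotProduct, dotProduct_comm]
    simp [u]
  have h_normSq : (star v ⬝ᵥ v).re = ‖u‖ ^ 2 := by
    rw [← inner_self_eq_norm_sq (𝕜 := ℂ) u, EuclideanSpace.inner_eq_star_dotProduct,
      dotProduct_comm]
    rfl
  rw [h_inner, h_normSq]
  calc ‖inner ℂ u (toEuclideanCLM (𝕜 := ℂ) y u)‖
      ≤ ‖u‖ * ‖toEuclideanCLM (𝕜 := ℂ) y u‖ := norm_inner_le_norm _ _
    _ ≤ ‖u‖ * (opNorm y * ‖u‖) := by gcongr; exact (toEuclideanCLM (𝕜 := ℂ) y).le_opNorm u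
    _ = ‖u‖ ^ 2 * opNorm y := by ring

lemma trace_vecMulVec_star_mul {d : ℕ} (v : Fin d → ℂ) (y : Matrix (Fin d) (Fin d) ℂ) :
    (vecMulVec v (star v) * y).trace = star v ⬝ᵥ (y *ᵥ v) := by
  rw [vecMulVec_mul, trace_vecMulVec, dotProduct_comm, dotProduct_mulVec]

lemma norm_trace_mul_le_of_posSemidef {d : ℕ} {ρ : Matrix (Fin d) (Fin d) ℂ} (hρ : ρ.PosSemidef)
    (y : Matrix (Fin d) (Fin d) ℂ) : ‖(ρ * y).trace‖ ≤ ρ.trace.re * opNorm y := by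
  obtain ⟨m, v, rfl⟩ := posSemidef_iff_eq_sum_vecMulVec.mp hρ
  simp only [Finset.sum_mul, trace_sum, trace_vecMulVec_star_mul, trace_vecMulVec,
    dotProduct_comm (v _), Complex.re_sum]
  exact (norm_sum_le _ _).trans (Finset.sum_le_sum fun i _ => norm_star_dotProduct_mulVec_le _ y)

lemma norm_trace_mul_orderedProd_le {d n : ℕ} {ρ : Matrix (Fin d) (Fin d) ℂ}
    (hρ : ρ.PosSemidef) (hρ1 : ρ.trace = 1) (x : Fin n → Matrix (Fin d) (Fin d) ℂ)
    {A : Finset (Fin n)} (hA : A.Nonempty) :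
    ‖(ρ * orderedProd x A).trace‖ ≤ ∏ j ∈ A, tripleNorm ρ (x j) :=
  calc ‖(ρ * orderedProd x A).trace‖ ≤ opNorm (orderedProd x A) := by
        simpa [hρ1] using norm_trace_mul_le_of_posSemidef hρ (orderedProd x A)
    _ ≤ ∏ j ∈ A, opNorm (x j) := opNorm_orderedProd_le x hA
    _ ≤ ∏ j ∈ A, tripleNorm ρ (x j) :=
        Finset.prod_le_prod (fun j _ => opNorm_nonneg _) fun j _ => opNorm_le_tripleNorm ρ (x j)

lemma norm_prod_trace_le_of_isSetPartition {d n : ℕ} {ρ : Matrix (Fin d) (Fin d) ℂ}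
    (hρ : ρ.PosSemidef) (hρ1 : ρ.trace = 1) (x : Fin n → Matrix (Fin d) (Fin d) ℂ)
    {σ : Finset (Finset (Fin n))} (hσ : IsSetPartition σ) :
    ‖∏ A ∈ σ, (ρ * orderedProd x A).trace‖ ≤ ∏ i, tripleNorm ρ (x i) := by
  rw [norm_prod, hσ.prod_eq]
  exact Finset.prod_le_prod (fun A _ => norm_nonneg _) fun A hA =>
    norm_trace_mul_orderedProd_le hρ hρ1 x (hσ.nonempty_of_mem hA)

theorem poisson_moment_growth_bound_general (d n : ℕ)
    (ρ : Matrix (Fin d) (Fin d) ℂ) (hρ : ρ.PosSemidef) (hρ1 : ρ.trace = 1)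
    (x : Fin n → Matrix (Fin d) (Fin d) ℂ) :
    ‖∑ σ ∈ Finset.univ.filter (IsSetPartition (n := n)),
        ∏ A ∈ σ, (ρ * orderedProd x A).trace‖
      ≤ ((Finset.univ.filter (IsSetPartition (n := n))).card : ℝ) *
          ∏ i : Fin n, tripleNorm ρ (x i) := by
  rw [← nsmul_eq_mul]
  refine (norm_sum_le _ _).trans (Finset.sum_le_card_nsmul _ _ _ fun σ hσ => ?_)
  exact norm_prod_trace_le_of_isSetPartition hρ hρ1 x (Finset.mem_filter.mp hσ).2

/-- Moment growth estimate for the Poisson moment formula: for a density matrix `ρ`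
(Hermitian, positive semidefinite, `Tr ρ = 1`),
`|Σ_σ Π_{A∈σ} Tr(ρ Π_{j∈A} x_j)| ≤ B_n · Π_i |||x_i|||`, where `B_n` is the Bell number
(the total number of set partitions of an `n`-element set). -/
theorem poisson_moment_growth_bound (d n : ℕ) (hd : 1 ≤ d) (hn : 1 ≤ n)
    (ρ : Matrix (Fin d) (Fin d) ℂ) (hρ : ρ.PosSemidef) (hρ1 : ρ.trace = 1)
    (x : Fin n → Matrix (Fin d) (Fin d) ℂ) :
    ‖∑ σ ∈ Finset.univ.filter (IsSetPartition (n := n)),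
        ∏ A ∈ σ, (ρ * orderedProd x A).trace‖
      ≤ ((Finset.univ.filter (IsSetPartition (n := n))).card : ℝ) *
          ∏ i : Fin n, tripleNorm ρ (x i) :=
  poisson_moment_growth_bound_general d n ρ hρ hρ1 x

end
end Stmt19
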